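/- arXiv:2407.07253 — 3 statements merged into one kernel-verified Lean document; each statement's English description precedes it below -/
import Mathlib

section
/- If K is symmetric positive definite and each I⁽ⁱ⁾ is a (nonzero) restriction matrix whose rows jointly span ℝⁿ (i.e., the concatenation of the I⁽ⁱ⁾ has rank n), then the additive Schwarz operator M⁻¹ = Σᵢ (I⁽ⁱ⁾)ᵀ (I⁽ⁱ⁾ K (I⁽ⁱ⁾)ᵀ)⁻¹ I⁽ⁱ⁾ is symmetric positive definite. -/
/-!
Each patch matrix `Iᵢ K Iᵢᵀ` is positive definite because `Iᵢᵀ` is injective, so its inverse is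
positive definite too. Then `xᵀ M⁻¹ x = ∑ᵢ (Iᵢ x)ᵀ (Iᵢ K Iᵢᵀ)⁻¹ (Iᵢ x)` is a sum of nonnegative
terms, and for `x ≠ 0` the spanning condition gives some `i` with `Iᵢ x ≠ 0`, whose term is positive.
-/

open Matrix

namespace Matrix

variable {m n F : Type*} [Fintype n]

theorem mulVec_injective_of_rank_eq_card [Field F] (A : Matrix m n F)
    (h : A.rank = Fintype.card n) : Function.Injective A.mulVec := by
  have nullity := A.mulVecLin.finrank_range_add_finrank_ker
  rw [← rank, h, Module.finrank_fintype_fun_eq_card, add_eq_left] at nullity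
  exact LinearMap.ker_eq_bot.mp (Submodule.finrank_eq_zero.mp nullity)

theorem vecMul_injective_of_rank_eq_card [Field F] [Fintype m] (A : Matrix m n F)
    (h : A.rank = Fintype.card m) : Function.Injective A.vecMul := by
  rw [show A.vecMul = Aᵀ.mulVec from funext fun v => (mulVec_transpose A v).symm]
  exact Aᵀ.mulVec_injective_of_rank_eq_card (by rw [rank_transpose, h])

variable {R : Type*} [CommRing R] [PartialOrder R] [StarRing R] [StarOrderedRing R]

theorem posDef_sum_conjTranspose_mul_mul {ι : Type*} [Fintype ι] {m : ι → Type*}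
    [∀ i, Fintype (m i)] (A : ∀ i, Matrix (m i) n R) (B : ∀ i, Matrix (m i) (m i) R)
    (hB : ∀ i, (B i).PosDef) (hA : ∀ x, (∀ i, A i *ᵥ x = 0) → x = 0) :
    (∑ i, (A i)ᴴ * B i * A i).PosDef := by
  have hterm i : ((A i)ᴴ * B i * A i).PosSemidef :=
    (hB i).posSemidef.conjTranspose_mul_mul_same (A i)
  refine .of_dotProduct_mulVec_pos (posSemidef_sum _ fun i _ => hterm i).isHermitian
    fun x hx => ?_
  obtain ⟨j, hj⟩ : ∃ j, A j *ᵥ x ≠ 0 := by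
    by_contra! h
    exact hx (hA x h)
  have hquad i :
      star x ⬝ᵥ ((A i)ᴴ * B i * A i) *ᵥ x = star (A i *ᵥ x) ⬝ᵥ B i *ᵥ (A i *ᵥ x) := by
    simp only [star_mulVec, dotProduct_mulVec, vecMul_vecMul, ← mulVec_mulVec]
  rw [sum_mulVec, dotProduct_sum]
  exact Finset.sum_pos' (fun i _ => (hterm i).dotProduct_mulVec_nonneg x)
    ⟨j, Finset.mem_univ _, hquad j ▸ (hB j).dotProduct_mulVec_pos hj⟩

end Matrix

theorem additive_schwarz_posdef (N : ℕ) (ι : Type) [Fintype ι] (np : ι → ℕ)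
    (K : Matrix (Fin N) (Fin N) ℝ) (hK : K.PosDef)
    (Iop : ∀ i : ι, Matrix (Fin (np i)) (Fin N) ℝ)
    (hrow : ∀ i : ι, (Iop i).rank = np i)
    (hspan : ∀ x : Fin N → ℝ, (∀ i : ι, (Iop i).mulVec x = 0) → x = 0) :
    (∑ i : ι, (Iop i)ᵀ * (Iop i * K * (Iop i)ᵀ)⁻¹ * Iop i).PosDef := by
  have hpatch i : (Iop i * K * (Iop i)ᵀ).PosDef := by
    simpa only [conjTranspose_eq_transpose_of_trivial] using
      hK.mul_mul_conjTranspose_same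
        ((Iop i).vecMul_injective_of_rank_eq_card (by simpa using hrow i))
  simpa only [conjTranspose_eq_transpose_of_trivial] using
    posDef_sum_conjTranspose_mul_mul Iop _ (fun i => (hpatch i).inv) hspan
end

section
/- A stationary iteration with error propagation matrix G = I - ω M⁻¹ K converges to the solution of K x = b for every initial guess if and only if the spectral radius of G is less than 1 (over ℂ, with K invertible). -/
/-!
The error `e_k = x_k - K⁻¹ b` of the iteration satisfies `e_{k+1} = G e_k`, so `e_k = G^k e_0`.
If every eigenvalue of `G` lies in the open unit disc, Gelfand's formula gives `‖G^k‖ ≤ r^k`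
eventually for some `r < 1`, hence `e_k → 0`. Conversely, starting from `x_0 = K⁻¹ b + v` with
`G v = μ v` gives `e_k = μ^k v`, which tends to `0` only if `‖μ‖ < 1`.
-/

open Filter Topology Matrix
open scoped NNReal

namespace spectrum

variable {A : Type*} [NormedRing A] [NormedAlgebra ℂ A] [CompleteSpace A]

theorem eventually_norm_pow_le_of_spectralRadius_lt {a : A} {r : ℝ≥0}
    (h : spectralRadius ℂ a < r) : ∀ᶠ k : ℕ in atTop, ‖a ^ k‖ ≤ r ^ k := by
  filter_upwards [(pow_nnnorm_pow_one_div_tendsto_nhds_spectralRadius a).eventually_lt_const h,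
    eventually_gt_atTop 0] with k hk hk0
  rw [one_div, ENNReal.rpow_inv_lt_iff (by positivity), ENNReal.rpow_natCast,
    ← ENNReal.coe_pow, ENNReal.coe_lt_coe, ← NNReal.coe_lt_coe, NNReal.coe_pow] at hk
  exact hk.le

theorem tendsto_pow_atTop_nhds_zero_of_spectralRadius_lt_one {a : A}
    (h : spectralRadius ℂ a < 1) : Tendsto (a ^ ·) atTop (𝓝 0) := by
  obtain ⟨r, hρr, hr1⟩ := ENNReal.lt_iff_exists_nnreal_btwn.mp h
  refine squeeze_zero_norm' (eventually_norm_pow_le_of_spectralRadius_lt hρr) ?_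
  exact tendsto_pow_atTop_nhds_zero_of_lt_one r.coe_nonneg (mod_cast hr1)

theorem tendsto_pow_atTop_nhds_zero_of_forall_norm_lt_one {a : A}
    (h : ∀ μ ∈ spectrum ℂ a, ‖μ‖ < 1) : Tendsto (a ^ ·) atTop (𝓝 0) := by
  nontriviality A
  refine tendsto_pow_atTop_nhds_zero_of_spectralRadius_lt_one ?_
  exact_mod_cast spectralRadius_lt_of_forall_lt a (r := 1) fun μ hμ => mod_cast h μ hμ

end spectrum

namespace Matrix

variable {ι : Type*} [Fintype ι] [DecidableEq ι]

theorem tendsto_pow_mulVec_nhds_zero_iff (A : Matrix ι ι ℂ) :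
    (∀ v : ι → ℂ, Tendsto (fun k => (A ^ k) *ᵥ v) atTop (𝓝 0)) ↔
      ∀ μ ∈ spectrum ℂ A, ‖μ‖ < 1 := by
  constructor
  · intro h μ hμ
    rw [← spectrum_toLin', ← Module.End.hasEigenvalue_iff_mem_spectrum] at hμ
    obtain ⟨v, hv⟩ := hμ.exists_hasEigenvector
    have hpow : ∀ k, (A ^ k) *ᵥ v = μ ^ k • v := fun k => by
      rw [← toLin'_apply, toLin'_pow, hv.pow_apply]
    have hnorm := (h v).norm
    simp only [hpow, norm_smul, norm_pow, norm_zero] at hnorm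
    have hμpow := hnorm.div_const ‖v‖
    simp only [zero_div, mul_div_cancel_right₀ _ (norm_ne_zero_iff.mpr hv.2)] at hμpow
    simpa using tendsto_pow_atTop_nhds_zero_iff.mp hμpow
  · intro h v
    -- any submultiplicative matrix norm works; this one induces the product topology
    let := Matrix.linftyOpNormedRing (n := ι) (α := ℂ)
    let := Matrix.linftyOpNormedAlgebra (n := ι) (α := ℂ) (R := ℂ)
    have : CompleteSpace (Matrix ι ι ℂ) := FiniteDimensional.complete ℂ _
    have hpow := spectrum.tendsto_pow_atTop_nhds_zero_of_forall_norm_lt_one h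
    exact ((continuous_id.matrix_mulVec continuous_const).tendsto' 0 0 (zero_mulVec v)).comp hpow

variable {R : Type*} [Ring R]

theorem eq_add_pow_mulVec_of_forall_succ_eq {G : Matrix ι ι R} {xs : ι → R} {x : ℕ → ι → R}
    (hx : ∀ k, x (k + 1) = xs + G *ᵥ (x k - xs)) (k : ℕ) :
    x k = xs + (G ^ k) *ᵥ (x 0 - xs) := by
  induction k with
  | zero => simp
  | succ k ih => rw [hx k, ih, add_sub_cancel_left, mulVec_mulVec, ← pow_succ']

theorem forall_tendsto_of_forall_succ_eq_iff [TopologicalSpace R] [IsTopologicalAddGroup R]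
    (G : Matrix ι ι R) (xs : ι → R) :
    (∀ x : ℕ → ι → R, (∀ k, x (k + 1) = xs + G *ᵥ (x k - xs)) → Tendsto x atTop (𝓝 xs)) ↔
      ∀ v : ι → R, Tendsto (fun k => (G ^ k) *ᵥ v) atTop (𝓝 0) := by
  constructor
  · intro h v
    have hx := h (fun k => xs + (G ^ k) *ᵥ v) fun k => by simp [pow_succ', mulVec_mulVec]
    simpa using hx.sub_const xs
  · intro h x hx
    have hlim := tendsto_const_nhds (x := xs).add (h (x 0 - xs))
    rw [add_zero] at hlim
    exact hlim.congr fun k => (eq_add_pow_mulVec_of_forall_succ_eq hx k).symm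

end Matrix

theorem stationary_iteration_convergence_iff_spectral_radius_general (n : ℕ)
    (K M : Matrix (Fin n) (Fin n) ℂ) (hK : IsUnit K.det)
    (ω : ℂ) (b : Fin n → ℂ) :
    (∀ x : ℕ → Fin n → ℂ,
        (∀ k, x (k + 1) = x k + ω • M⁻¹.mulVec (b - K.mulVec (x k))) →
        Filter.Tendsto x Filter.atTop (nhds (K⁻¹.mulVec b))) ↔
      (∀ μ ∈ spectrum ℂ (1 - ω • (M⁻¹ * K)), ‖μ‖ < 1) := by
  have hstep : ∀ y, y + ω • M⁻¹ *ᵥ (b - K *ᵥ y) =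
      K⁻¹ *ᵥ b + (1 - ω • (M⁻¹ * K)) *ᵥ (y - K⁻¹ *ᵥ b) := by
    intro y
    have hres : b - K *ᵥ y = -(K *ᵥ (y - K⁻¹ *ᵥ b)) := by
      rw [mulVec_sub, mulVec_mulVec, mul_nonsing_inv K hK, one_mulVec, neg_sub]
    rw [hres, sub_mulVec, one_mulVec, smul_mulVec, ← mulVec_mulVec, mulVec_neg]
    module
  simp_rw [hstep]
  rw [forall_tendsto_of_forall_succ_eq_iff, tendsto_pow_mulVec_nhds_zero_iff]

theorem stationary_iteration_convergence_iff_spectral_radius (n : ℕ)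
    (K M : Matrix (Fin n) (Fin n) ℂ) (hM : IsUnit M.det) (hK : IsUnit K.det)
    (ω : ℂ) (b : Fin n → ℂ) :
    (∀ x : ℕ → Fin n → ℂ,
        (∀ k, x (k + 1) = x k + ω • M⁻¹.mulVec (b - K.mulVec (x k))) →
        Filter.Tendsto x Filter.atTop (nhds (K⁻¹.mulVec b))) ↔
      (∀ μ ∈ spectrum ℂ (1 - ω • (M⁻¹ * K)), ‖μ‖ < 1) :=
  stationary_iteration_convergence_iff_spectral_radius_general n K M hK ω b
end

section
/- For the saddle-point matrix K = [[A, Bᵀ],[B, 0]] with A symmetric positive definite and B of full row rank, the block-diagonal preconditioned matrix diag(A, S)⁻¹ K, where S = B A⁻¹ Bᵀ, has minimal polynomial dividing (x-1)(x² - x - 1), so a Krylov method converges in at most 3 iterations. -/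
/-!
Writing `X = A⁻¹ Bᵀ` and `Y = S⁻¹ B`, the preconditioned matrix is `T = [[1, X], [Y, 0]]` with
`Y X = 1`. Then `T (T - 1) = diag(X Y, 1)`, and `T² - T - 1 = T (T - 1) - 1`, so the product is
`P (P - 1)` for `P = diag(X Y, 1)`, which vanishes because `X Y` is idempotent. The Schur
complement `S` is invertible because it is positive definite, `Bᵀ` being injective.
-/

open Matrix

namespace Matrix

section BlockIdentity

variable {l m R : Type*} [Fintype l] [Fintype m] [DecidableEq l] [DecidableEq m] [Ring R]

theorem fromBlocks_one_mul_sub_one {X : Matrix l m R} {Y : Matrix m l R} (hYX : Y * X = 1) :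
    fromBlocks 1 X Y 0 * (fromBlocks 1 X Y 0 - 1) = fromBlocks (X * Y) 0 0 1 := by
  rw [← fromBlocks_one, sub_eq_add_neg, fromBlocks_neg, fromBlocks_add, fromBlocks_multiply]
  simp [hYX]

theorem fromBlocks_one_mul_sub_one_mul_sq_sub_eq_zero {X : Matrix l m R} {Y : Matrix m l R}
    (hYX : Y * X = 1) :
    let T := fromBlocks 1 X Y 0
    T * (T - 1) * (T * T - T - 1) = 0 := by
  intro T
  have hXY : X * Y * (X * Y) = X * Y := by
    rw [Matrix.mul_assoc, ← Matrix.mul_assoc Y, hYX, Matrix.one_mul]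
  have hquad : T * T - T - 1 = T * (T - 1) - 1 := by noncomm_ring
  rw [hquad, fromBlocks_one_mul_sub_one hYX, ← fromBlocks_one, sub_eq_add_neg, fromBlocks_neg,
    fromBlocks_add, fromBlocks_multiply]
  simp [mul_add, hXY]

end BlockIdentity

theorem vecMul_injective_of_rank_eq_card_s19 {m n K : Type*} [Fintype m] [Fintype n] [Field K]
    {B : Matrix m n K} (hB : B.rank = Fintype.card m) : Function.Injective B.vecMul := by
  rw [vecMul_injective_iff, linearIndependent_iff_card_eq_finrank_span, Set.finrank,
    ← rank_eq_finrank_span_row, hB]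

theorem PosDef.mul_inv_mul_transpose {m n : Type*} [Fintype m] [Fintype n] [DecidableEq n]
    {A : Matrix n n ℝ} {B : Matrix m n ℝ} (hA : A.PosDef) (hB : B.rank = Fintype.card m) :
    (B * A⁻¹ * Bᵀ).PosDef := by
  simpa using hA.inv.mul_mul_conjTranspose_same (vecMul_injective_of_rank_eq_card_s19 hB)

theorem inv_fromBlocks_diag_mul_fromBlocks {l m K : Type*} [Fintype l] [Fintype m]
    [DecidableEq l] [DecidableEq m] [Field K] {A : Matrix l l K} {S : Matrix m m K}
    (hA : IsUnit A) (hS : IsUnit S) (C : Matrix l m K) (D : Matrix m l K) :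
    (fromBlocks A 0 0 S)⁻¹ * fromBlocks A C D 0 = fromBlocks 1 (A⁻¹ * C) (S⁻¹ * D) 0 := by
  rw [inv_fromBlocks_zero₂₁_of_isUnit_iff A 0 S (iff_of_true hA hS), fromBlocks_multiply]
  simp [nonsing_inv_mul A ((isUnit_iff_isUnit_det A).mp hA)]

end Matrix

theorem block_diag_preconditioned_minimal_polynomial (n m : ℕ)
    (A : Matrix (Fin n) (Fin n) ℝ) (B : Matrix (Fin m) (Fin n) ℝ)
    (hA : A.PosDef) (hB : B.rank = m) :
    let S := B * A⁻¹ * Bᵀ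
    let K := Matrix.fromBlocks A Bᵀ B (0 : Matrix (Fin m) (Fin m) ℝ)
    let T := (Matrix.fromBlocks A 0 0 S)⁻¹ * K
    T * (T - 1) * (T * T - T - 1) = 0 := by
  intro S K T
  have hS : IsUnit S := (hA.mul_inv_mul_transpose (by rwa [Fintype.card_fin])).isUnit
  have hT : T = fromBlocks 1 (A⁻¹ * Bᵀ) (S⁻¹ * B) 0 :=
    inv_fromBlocks_diag_mul_fromBlocks hA.isUnit hS Bᵀ B
  have hYX : S⁻¹ * B * (A⁻¹ * Bᵀ) = 1 := by
    rw [Matrix.mul_assoc, ← Matrix.mul_assoc B]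
    exact nonsing_inv_mul S ((isUnit_iff_isUnit_det S).mp hS)
  rw [hT]
  exact fromBlocks_one_mul_sub_one_mul_sq_sub_eq_zero hYX
end
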